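/- arXiv:1203.3593 — 5 statements merged into one kernel-verified Lean document; each statement's English description precedes it below -/
import Mathlib

section
/- For every real number r and every natural number k ≥ 1, the product ∏_{i=1}^{k} (1 - (1-r)/(k-i+1)) equals (r/k) · ∏_{i=1}^{k-1} (1 + r/i). -/
lemma aux_prod (r : ℝ) : ∀ k : ℕ, 1 ≤ k →
    ∏ j ∈ Finset.Icc 1 k, (1 - (1 - r) / (j : ℝ)) =
      (r / (k : ℝ)) * ∏ i ∈ Finset.Icc 1 (k - 1), (1 + r / (i : ℝ)) := by
  intro k
  induction k with
  | zero => omega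
  | succ n ih =>
    intro _
    rcases Nat.eq_zero_or_pos n with hn | hn
    · subst hn; simp
    · have hn' : (1 : ℕ) ≤ n := hn
      rw [Finset.prod_Icc_succ_top (by omega), ih hn']
      have hstep : n + 1 - 1 = n := rfl
      rw [hstep]
      have hn1 : n - 1 + 1 = n := by omega
      have : ∏ i ∈ Finset.Icc 1 n, (1 + r / (i : ℝ)) =
          (∏ i ∈ Finset.Icc 1 (n - 1), (1 + r / (i : ℝ))) * (1 + r / (n : ℝ)) := by
        conv_lhs => rw [← hn1]
        rw [Finset.prod_Icc_succ_top (by omega : 1 ≤ n - 1 + 1), hn1]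
      rw [this]
      have hnR : (n : ℝ) ≠ 0 := Nat.cast_ne_zero.mpr (by omega)
      have hnR1 : (n : ℝ) + 1 ≠ 0 := by positivity
      push_cast
      field_simp
      ring
/-- In the re-optimization model for guaranteed ad delivery with `k` cycles and
supply forecast error rate `r`, the fraction of the original demand left
undelivered after all `k` cycles, `∏_{i=1}^{k} (1 - (1-r)/(k-i+1))`, equals
`(r/k) · ∏_{i=1}^{k-1} (1 + r/i)`. -/
theorem remaining_demand_product_formula (r : ℝ) (k : ℕ) (hk : 1 ≤ k) :
    ∏ i ∈ Finset.Icc 1 k, (1 - (1 - r) / ((k : ℝ) - (i : ℝ) + 1)) =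
      (r / (k : ℝ)) * ∏ i ∈ Finset.Icc 1 (k - 1), (1 + r / (i : ℝ)) := by
  have h1 : ∏ i ∈ Finset.Icc 1 k, (1 - (1 - r) / ((k : ℝ) - (i : ℝ) + 1)) =
      ∏ j ∈ Finset.Icc 1 k, (1 - (1 - r) / (j : ℝ)) := by
    apply Finset.prod_nbij' (fun i => k + 1 - i) (fun j => k + 1 - j)
    · intro a ha; simp only [Finset.mem_Icc] at *; omega
    · intro a ha; simp only [Finset.mem_Icc] at *; omega
    · intro a ha; simp only [Finset.mem_Icc] at ha; omega
    · intro a ha; simp only [Finset.mem_Icc] at ha; omega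
    · intro a ha
      simp only [Finset.mem_Icc] at ha
      have : ((k + 1 - a : ℕ) : ℝ) = (k : ℝ) - (a : ℝ) + 1 := by
        have := ha.2
        push_cast [Nat.cast_sub (by omega : a ≤ k + 1)]
        ring
      rw [this]
  rw [h1, aux_prod r k hk]
end

section
/- Let k ≥ 1 be a natural number and let r be a real number with 0 < r < 1. Then the quantity U(k,r) = (r/k) · ∏_{i=1}^{k-1} (1 + r/i) satisfies 0 < U(k,r) ≤ (r + r²)/k^{1-r}. -/
/-!
Bound each factor `1 + r/i` with `i ≥ 2` by `exp (r/i)`: the product of these factors is at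
most `exp (r ∑_{i=2}^{m} 1/i) ≤ exp (r log m) = m^r`, since the harmonic number satisfies
`H_m ≤ 1 + log m`. Keeping the factor `i = 1` exact gives `∏_{i=1}^{k-1} (1 + r/i) ≤ (1 + r) k^r`,
and dividing by `k` gives the bound on `U(k, r)`.
-/

open Finset Real

theorem prod_one_add_div_le_exp_mul_sum {r : ℝ} (hr : 0 ≤ r) (s : Finset ℕ) :
    ∏ i ∈ s, (1 + r / i) ≤ exp (r * ∑ i ∈ s, (i : ℝ)⁻¹) := by
  rw [mul_sum, exp_sum]
  refine prod_le_prod (fun i _ ↦ by positivity) fun i _ ↦ ?_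
  simpa [add_comm, div_eq_mul_inv] using add_one_le_exp (r / i)

theorem sum_Ioc_one_inv_le_log (m : ℕ) : ∑ i ∈ Ioc 1 m, (i : ℝ)⁻¹ ≤ log m := by
  rcases Nat.eq_zero_or_pos m with rfl | hm
  · simp
  have h := harmonic_le_one_add_log m
  rw [harmonic_eq_sum_Icc, Icc_eq_cons_Ioc (Nat.one_le_of_lt hm), sum_cons] at h
  push_cast at h
  linarith

theorem prod_Icc_one_add_div_le {r : ℝ} (hr : 0 ≤ r) (m : ℕ) :
    ∏ i ∈ Icc 1 m, (1 + r / i) ≤ (1 + r) * ((m : ℝ) + 1) ^ r := by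
  rcases Nat.eq_zero_or_pos m with rfl | hm
  · simpa using hr
  have hm' : (0 : ℝ) < m := by exact_mod_cast hm
  rw [Icc_eq_cons_Ioc hm, prod_cons, Nat.cast_one, div_one]
  gcongr
  calc ∏ i ∈ Ioc 1 m, (1 + r / i)
      ≤ exp (r * ∑ i ∈ Ioc 1 m, (i : ℝ)⁻¹) := prod_one_add_div_le_exp_mul_sum hr _
    _ ≤ exp (r * log ((m : ℝ) + 1)) := by
        gcongr
        exact (sum_Ioc_one_inv_le_log m).trans (log_le_log hm' (by linarith))
    _ = ((m : ℝ) + 1) ^ r := by rw [rpow_def_of_pos (by positivity), mul_comm]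

theorem underdelivery_bound_pos_error_general (k : ℕ) (hk : 1 ≤ k) (r : ℝ)
    (hr0 : 0 < r) :
    0 < (r / (k : ℝ)) * ∏ i ∈ Finset.Icc 1 (k - 1), (1 + r / (i : ℝ)) ∧
      (r / (k : ℝ)) * ∏ i ∈ Finset.Icc 1 (k - 1), (1 + r / (i : ℝ)) ≤
        (r + r ^ 2) / (k : ℝ) ^ (1 - r) := by
  obtain ⟨m, rfl⟩ : ∃ m, k = m + 1 := ⟨k - 1, by omega⟩
  rw [Nat.add_sub_cancel, Nat.cast_add_one]
  have hm : (0 : ℝ) < m + 1 := by positivity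
  refine ⟨mul_pos (by positivity) (prod_pos fun i _ ↦ by positivity), ?_⟩
  calc r / (m + 1) * ∏ i ∈ Icc 1 m, (1 + r / i)
      ≤ r / (m + 1) * ((1 + r) * ((m : ℝ) + 1) ^ r) := by
        gcongr
        exact prod_Icc_one_add_div_le hr0.le m
    _ = (r + r ^ 2) / ((m : ℝ) + 1) ^ (1 - r) := by
        rw [rpow_sub hm, rpow_one]
        field_simp

/-- For `k ≥ 1` optimization cycles and supply forecast error rate `0 < r < 1`,
the underdelivery fraction `U(k,r) = (r/k) · ∏_{i=1}^{k-1} (1 + r/i)` is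
positive and bounded above by `(r + r²)/k^(1-r)`. -/
theorem underdelivery_bound_pos_error (k : ℕ) (hk : 1 ≤ k) (r : ℝ)
    (hr0 : 0 < r) (hr1 : r < 1) :
    0 < (r / (k : ℝ)) * ∏ i ∈ Finset.Icc 1 (k - 1), (1 + r / (i : ℝ)) ∧
      (r / (k : ℝ)) * ∏ i ∈ Finset.Icc 1 (k - 1), (1 + r / (i : ℝ)) ≤
        (r + r ^ 2) / (k : ℝ) ^ (1 - r) :=
  underdelivery_bound_pos_error_general k hk r hr0
end

section
/- Let k ≥ 1 be a natural number and let r be a real number with -1 < r < 0. Then the quantity U(k,r) = (r/k) · ∏_{i=1}^{k-1} (1 + r/i) satisfies U(k,r) < 0 and |U(k,r)| ≤ |r|/k^{1-r}. -/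
/-!
Every factor satisfies `0 < 1 + r / i ≤ exp (r / i)`, so the product lies in `(0, exp (r H))`
with `H = ∑_{i < k} 1 / i ≥ log k`. As `r < 0`, `exp (r H) ≤ exp (r log k) = k ^ r`, and
`|r| / k * k ^ r = |r| / k ^ (1 - r)`.
-/

open Finset Real

lemma one_add_div_pos {r x : ℝ} (hr : -1 < r) (hx : 1 ≤ x) : 0 < 1 + r / x := by
  rcases le_or_gt 0 r with h | h
  · positivity
  · have : r ≤ r / x := by
      rw [le_div_iff₀ (by linarith)]
      nlinarith
    linarith

lemma log_add_one_le_sum_Icc_inv (n : ℕ) :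
    log ((n : ℝ) + 1) ≤ ∑ i ∈ Icc 1 n, (i : ℝ)⁻¹ := by
  simpa [harmonic_eq_sum_Icc] using log_add_one_le_harmonic n

lemma prod_Icc_one_add_div_le_rpow {r : ℝ} (hr₀ : -1 < r) (hr₁ : r ≤ 0) (n : ℕ) :
    ∏ i ∈ Icc 1 n, (1 + r / i) ≤ ((n : ℝ) + 1) ^ r :=
  calc ∏ i ∈ Icc 1 n, (1 + r / i)
      ≤ ∏ i ∈ Icc 1 n, exp (r / i) := by
        refine prod_le_prod (fun i hi => (one_add_div_pos hr₀ ?_).le)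
          (fun i _ => by linarith [add_one_le_exp (r / i)])
        exact_mod_cast (mem_Icc.1 hi).1
    _ = exp (r * ∑ i ∈ Icc 1 n, (i : ℝ)⁻¹) := by
        simp only [← exp_sum, mul_sum, div_eq_mul_inv]
    _ ≤ exp (r * log ((n : ℝ) + 1)) :=
        exp_le_exp.2 (mul_le_mul_of_nonpos_left (log_add_one_le_sum_Icc_inv n) hr₁)
    _ = ((n : ℝ) + 1) ^ r := by rw [rpow_def_of_pos (by positivity), mul_comm]

/-- For `k ≥ 1` optimization cycles and supply forecast error rate `-1 < r < 0`,
the quantity `U(k,r) = (r/k) · ∏_{i=1}^{k-1} (1 + r/i)` is negative (i.e. the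
contract overdelivers) and its absolute value is bounded above by `|r|/k^(1-r)`. -/
theorem overdelivery_bound_neg_error (k : ℕ) (hk : 1 ≤ k) (r : ℝ)
    (hr0 : -1 < r) (hr1 : r < 0) :
    (r / (k : ℝ)) * ∏ i ∈ Finset.Icc 1 (k - 1), (1 + r / (i : ℝ)) < 0 ∧
      |(r / (k : ℝ)) * ∏ i ∈ Finset.Icc 1 (k - 1), (1 + r / (i : ℝ))| ≤
        |r| / (k : ℝ) ^ (1 - r) := by
  obtain ⟨n, rfl⟩ : ∃ n, k = n + 1 := ⟨k - 1, by omega⟩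
  rw [Nat.add_sub_cancel]
  push_cast
  have hP : 0 < ∏ i ∈ Icc 1 n, (1 + r / (i : ℝ)) :=
    prod_pos fun i hi => one_add_div_pos hr0 (by exact_mod_cast (mem_Icc.1 hi).1)
  refine ⟨mul_neg_of_neg_of_pos (div_neg_of_neg_of_pos hr1 (by positivity)) hP, ?_⟩
  calc |r / ((n : ℝ) + 1) * ∏ i ∈ Icc 1 n, (1 + r / (i : ℝ))|
      = |r| / ((n : ℝ) + 1) * ∏ i ∈ Icc 1 n, (1 + r / (i : ℝ)) := by
        rw [abs_mul, abs_div, abs_of_pos (by positivity : (0 : ℝ) < n + 1), abs_of_pos hP]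
    _ ≤ |r| / ((n : ℝ) + 1) * ((n : ℝ) + 1) ^ r := by
        gcongr
        exact prod_Icc_one_add_div_le_rpow hr0 hr1.le n
    _ = |r| / ((n : ℝ) + 1) ^ (1 - r) := by
        rw [rpow_sub (by positivity), rpow_one]
        field_simp
end

section
/- Fix a real number r with 0 < r < 1, and define U(k,r) = (r/k) · ∏_{i=1}^{k-1} (1 + r/i) for natural numbers k ≥ 1. Then U(k+1,r) < U(k,r) for all k ≥ 1; that is, the underdelivery fraction is strictly decreasing in the number of optimization cycles. -/
/-- For a fixed supply forecast error rate `0 < r < 1`, the underdelivery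
fraction `U(k,r) = (r/k) · ∏_{i=1}^{k-1} (1 + r/i)` is strictly decreasing in
the number `k ≥ 1` of optimization cycles. -/
theorem underdelivery_strict_anti (r : ℝ) (hr0 : 0 < r) (hr1 : r < 1)
    (k : ℕ) (hk : 1 ≤ k) :
    (r / ((k + 1 : ℕ) : ℝ)) * ∏ i ∈ Finset.Icc 1 ((k + 1) - 1), (1 + r / (i : ℝ)) <
      (r / (k : ℝ)) * ∏ i ∈ Finset.Icc 1 (k - 1), (1 + r / (i : ℝ)) := by
  obtain ⟨n, rfl⟩ : ∃ n, k = n + 1 := ⟨k - 1, (Nat.succ_pred_eq_of_pos hk).symm⟩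
  have hP : (0 : ℝ) < ∏ i ∈ Finset.Icc 1 n, (1 + r / (i : ℝ)) := by
    apply Finset.prod_pos
    intro i hi
    have hi1 : (1 : ℕ) ≤ i := (Finset.mem_Icc.mp hi).1
    have : (0 : ℝ) < i := by exact_mod_cast hi1
    positivity
  have hsimp1 : (n + 1 + 1) - 1 = n + 1 := by omega
  have hsimp2 : (n + 1) - 1 = n := by omega
  rw [hsimp1, hsimp2, Finset.prod_Icc_succ_top (by omega : 1 ≤ n + 1)]
  have hn1 : (0:ℝ) < (n:ℝ) + 1 := by positivity
  have hn2 : (0:ℝ) < (n:ℝ) + 2 := by positivity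
  push_cast
  have key : r / ((n:ℝ) + 1 + 1) * (1 + r / ((n:ℝ) + 1)) < r / ((n:ℝ) + 1) := by
    have h1 : 1 + r / ((n:ℝ) + 1) = ((n:ℝ) + 1 + r) / ((n:ℝ) + 1) := by
      field_simp
    rw [h1, div_mul_div_comm, div_lt_div_iff₀ (by positivity) (by positivity)]
    nlinarith [mul_pos (mul_pos hr0 hn1) (sub_pos.mpr hr1)]
  calc r / ((n:ℝ) + 1 + 1) * ((∏ i ∈ Finset.Icc 1 n, (1 + r / (i : ℝ))) *
        (1 + r / ((n:ℝ) + 1)))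
      = (r / ((n:ℝ) + 1 + 1) * (1 + r / ((n:ℝ) + 1))) *
        ∏ i ∈ Finset.Icc 1 n, (1 + r / (i : ℝ)) := by ring
    _ < (r / ((n:ℝ) + 1)) * ∏ i ∈ Finset.Icc 1 n, (1 + r / (i : ℝ)) :=
        mul_lt_mul_of_pos_right key hP
end

section
/- Fix a real number r with 0 < r < 1, and define U(k,r) = (r/k) · ∏_{i=1}^{k-1} (1 + r/i) for natural numbers k ≥ 1. Then U(k,r) tends to 0 as k tends to infinity. -/
open Filter Finset Real

/- Since `1 + x ≤ exp x`, the product is at most `exp (r H_{k-1}) ≤ e^r k^r`, where `H` is the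
harmonic sum; hence `U(k,r) ≤ r e^r k^(r-1)`, which tends to `0` because `r < 1`. -/

lemma prod_one_add_div_le_exp_mul_harmonic {r : ℝ} (hr : 0 ≤ r) (n : ℕ) :
    ∏ i ∈ Icc 1 n, (1 + r / i) ≤ exp (r * harmonic n) :=
  calc ∏ i ∈ Icc 1 n, (1 + r / i)
      ≤ ∏ i ∈ Icc 1 n, exp (r / i) :=
        prod_le_prod (fun i _ => by positivity) fun i _ => by linarith [add_one_le_exp (r / i)]
    _ = exp (r * harmonic n) := by
        rw [← exp_sum, harmonic_eq_sum_Icc]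
        push_cast
        simp only [mul_sum, div_eq_mul_inv]

lemma harmonic_le_one_add_log_succ (n : ℕ) : (harmonic n : ℝ) ≤ 1 + log (n + 1) := by
  have hlog : log n ≤ log (n + 1) := by
    rcases n.eq_zero_or_pos with rfl | hn
    · simp
    · exact log_le_log (by positivity) (by linarith)
  linarith [harmonic_le_one_add_log n]

lemma prod_one_add_div_le_exp_mul_rpow {r : ℝ} (hr : 0 ≤ r) (n : ℕ) :
    ∏ i ∈ Icc 1 n, (1 + r / i) ≤ exp r * (n + 1) ^ r :=
  calc ∏ i ∈ Icc 1 n, (1 + r / i)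
      ≤ exp (r * harmonic n) := prod_one_add_div_le_exp_mul_harmonic hr n
    _ ≤ exp (r * (1 + log (n + 1))) := by gcongr; exact harmonic_le_one_add_log_succ n
    _ = exp r * (n + 1) ^ r := by
        rw [mul_add, mul_one, exp_add, rpow_def_of_pos (by positivity), mul_comm r]

lemma div_mul_prod_one_add_div_le {r : ℝ} (hr : 0 ≤ r) (n : ℕ) :
    r / (n + 1) * ∏ i ∈ Icc 1 n, (1 + r / i) ≤ r * exp r * (n + 1) ^ (r - 1) := by
  have hn : (0 : ℝ) < n + 1 := by positivity
  calc r / (n + 1) * ∏ i ∈ Icc 1 n, (1 + r / i)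
      ≤ r / (n + 1) * (exp r * (n + 1) ^ r) := by
        gcongr; exact prod_one_add_div_le_exp_mul_rpow hr n
    _ = r * exp r * (n + 1) ^ (r - 1) := by
        rw [rpow_sub_one hn.ne']
        ring

open Filter in
/-- For a fixed supply forecast error rate `0 < r < 1`, the underdelivery
fraction `U(k,r) = (r/k) · ∏_{i=1}^{k-1} (1 + r/i)` tends to `0` as the number
of optimization cycles `k` tends to infinity. -/
theorem underdelivery_tendsto_zero (r : ℝ) (hr0 : 0 < r) (hr1 : r < 1) :
    Tendsto (fun k : ℕ =>
        (r / (k : ℝ)) * ∏ i ∈ Finset.Icc 1 (k - 1), (1 + r / (i : ℝ)))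
      atTop (nhds 0) := by
  have hbound : Tendsto (fun k : ℕ => r * exp r * (k : ℝ) ^ (r - 1)) atTop (nhds 0) := by
    have hpow := (tendsto_rpow_neg_atTop (sub_pos.2 hr1)).comp tendsto_natCast_atTop_atTop
    simpa [Function.comp_def] using hpow.const_mul (r * exp r)
  -- shift to `k = n + 1`, so that the truncated `k - 1` becomes `n`
  rw [← tendsto_add_atTop_iff_nat 1] at hbound ⊢
  push_cast at hbound ⊢
  exact squeeze_zero (fun n => mul_nonneg (by positivity) (prod_nonneg fun i _ => by positivity))
    (div_mul_prod_one_add_div_le hr0.le) hbound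
end
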